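/- arXiv:1803.02924 — 2 statements merged into one kernel-verified Lean document; each statement's English description precedes it below -/
import Mathlib

section
/- Let ε > 0, let H be a symmetric n×n real matrix with ‖H‖ ≤ M, and set H̄ = H + 2εI. Let y_j, r_j, p_j be CG iterates for H̄ and g ≠ 0, well defined through index j (so p_iᵀ H̄ p_i > 0 and r_i ≠ 0 for all i ≤ j). Then q(y_{j+1}) ≤ q(y_j) − ‖r_j‖² / (2(M+2ε)). -/
/-!
The classical CG relations `⟪r (i+1), p i⟫ = 0`, `⟪r (i+1), r i⟫ = 0` and
`⟪p (i+1), H̄ (p i)⟫ = 0` give `⟪r j, p j⟫ = -‖r j‖²` and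
`⟪p j, H̄ (p j)⟫ ≤ ⟪r j, H̄ (r j)⟫`. Since `r j = H̄ (y j) + g` is the gradient of `q` at `y j`,
the exact line step along `p j` lowers `q` by `‖r j‖⁴ / (2 ⟪p j, H̄ (p j)⟫)`, and
`⟪r j, H̄ (r j)⟫ ≤ (M + 2ε) ‖r j‖²` turns this into the claimed decrease.
-/

open RealInnerProductSpace

variable {E : Type*} [NormedAddCommGroup E] [InnerProductSpace ℝ E]

noncomputable def quadObjective (A : E →ₗ[ℝ] E) (g z : E) : ℝ := 1/2 * ⟪z, A z⟫ + ⟪g, z⟫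

theorem quadObjective_add_smul {A : E →ₗ[ℝ] E} (hA : A.IsSymmetric) (g y p : E) (t : ℝ) :
    quadObjective A g (y + t • p) =
      quadObjective A g y + t * ⟪p, A y + g⟫ + t^2 / 2 * ⟪p, A p⟫ := by
  have hsw : ⟪y, A p⟫ = ⟪p, A y⟫ := by rw [← hA, real_inner_comm]
  simp only [quadObjective, map_add, map_smul, inner_add_left, inner_add_right,
    real_inner_smul_left, real_inner_smul_right, hsw, real_inner_comm g p]
  ring

structure IsCGRun (A : E →ₗ[ℝ] E) (g : E) (j : ℕ) (y r p : ℕ → E) (α : ℕ → ℝ) : Prop where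
  y_zero : y 0 = 0
  r_zero : r 0 = g
  p_zero : p 0 = -g
  α_eq : ∀ i ≤ j, α i = ‖r i‖^2 / ⟪p i, A (p i)⟫
  y_succ : ∀ i ≤ j, y (i+1) = y i + α i • p i
  r_succ : ∀ i ≤ j, r (i+1) = r i + α i • A (p i)
  p_succ : ∀ i ≤ j, p (i+1) = -(r (i+1)) + (‖r (i+1)‖^2 / ‖r i‖^2) • p i
  curv_pos : ∀ i ≤ j, 0 < ⟪p i, A (p i)⟫
  r_ne_zero : ∀ i ≤ j, r i ≠ 0

namespace IsCGRun

variable {A : E →ₗ[ℝ] E} {g : E} {j : ℕ} {y r p : ℕ → E} {α : ℕ → ℝ}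

theorem α_pos (h : IsCGRun A g j y r p α) {i : ℕ} (hi : i ≤ j) : 0 < α i := by
  rw [h.α_eq i hi]
  exact div_pos (pow_pos (norm_pos_iff.mpr (h.r_ne_zero i hi)) 2) (h.curv_pos i hi)

theorem α_smul_apply_p (h : IsCGRun A g j y r p α) {i : ℕ} (hi : i ≤ j) :
    α i • A (p i) = r (i+1) - r i := by
  rw [h.r_succ i hi, add_sub_cancel_left]

theorem r_eq (h : IsCGRun A g j y r p α) : ∀ i ≤ j + 1, r i = A (y i) + g := by
  intro i
  induction i with
  | zero => intro _; rw [h.r_zero, h.y_zero, map_zero, zero_add]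
  | succ i ih =>
    intro hi
    have hij : i ≤ j := by omega
    rw [h.r_succ i hij, ih (by omega), h.y_succ i hij, map_add, map_smul]
    abel

variable (hA : A.IsSymmetric)
include hA

theorem inner_r_succ_p_of_inner_r_p (h : IsCGRun A g j y r p α) {i : ℕ} (hi : i ≤ j)
    (hrp : ⟪r i, p i⟫ = -‖r i‖^2) : ⟪r (i+1), p i⟫ = 0 := by
  rw [h.r_succ i hi, inner_add_left, real_inner_smul_left, hrp, hA, h.α_eq i hi,
    div_mul_cancel₀ _ (h.curv_pos i hi).ne']
  ring

theorem inner_r_p (h : IsCGRun A g j y r p α) : ∀ i ≤ j + 1, ⟪r i, p i⟫ = -‖r i‖^2 := by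
  intro i
  induction i with
  | zero => intro _; rw [h.r_zero, h.p_zero, inner_neg_right, real_inner_self_eq_norm_sq]
  | succ i ih =>
    intro hi
    have hij : i ≤ j := by omega
    rw [h.p_succ i hij, inner_add_right, inner_neg_right, real_inner_smul_right,
      real_inner_self_eq_norm_sq, h.inner_r_succ_p_of_inner_r_p hA hij (ih (by omega))]
    ring

theorem inner_r_succ_p (h : IsCGRun A g j y r p α) {i : ℕ} (hi : i ≤ j) :
    ⟪r (i+1), p i⟫ = 0 :=
  h.inner_r_succ_p_of_inner_r_p hA hi (h.inner_r_p hA i (by omega))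

theorem α_mul_inner_p_succ_apply_p (h : IsCGRun A g j y r p α) {i : ℕ} (hi : i ≤ j) :
    α i * ⟪p (i+1), A (p i)⟫ = ⟪r (i+1), r i⟫ := by
  have hr : ‖r i‖ ≠ 0 := norm_ne_zero_iff.mpr (h.r_ne_zero i hi)
  have hp_r : ⟪p (i+1), r i⟫ = -⟪r (i+1), r i⟫ - ‖r (i+1)‖^2 := by
    rw [h.p_succ i hi, inner_add_left, inner_neg_left, real_inner_smul_left,
      real_inner_comm (r i) (p i), h.inner_r_p hA i (by omega)]
    field_simp
    ring
  rw [← real_inner_smul_right, h.α_smul_apply_p hi, inner_sub_right, hp_r,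
    real_inner_comm, h.inner_r_p hA (i+1) (by omega)]
  ring

theorem inner_p_succ_apply_p_of_inner_r_succ_r (h : IsCGRun A g j y r p α) {i : ℕ}
    (hi : i ≤ j) (hrr : ⟪r (i+1), r i⟫ = 0) : ⟪p (i+1), A (p i)⟫ = 0 := by
  have := h.α_mul_inner_p_succ_apply_p hA hi
  rw [hrr] at this
  exact (mul_eq_zero.mp this).resolve_left (h.α_pos hi).ne'

theorem inner_r_succ_r (h : IsCGRun A g j y r p α) : ∀ i ≤ j, ⟪r (i+1), r i⟫ = 0 := by
  intro i
  induction i with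
  | zero =>
    intro hi
    rw [show r 0 = -p 0 by rw [h.r_zero, h.p_zero, neg_neg], inner_neg_right,
      h.inner_r_succ_p hA hi, neg_zero]
  | succ i ih =>
    intro hi
    have hij : i ≤ j := by omega
    have hr_next_p : ⟪r (i+2), p i⟫ = 0 := by
      rw [h.r_succ (i+1) hi, inner_add_left, h.inner_r_succ_p hA hij, real_inner_smul_left, hA,
        h.inner_p_succ_apply_p_of_inner_r_succ_r hA hij (ih hij), mul_zero, add_zero]
    have hr : r (i+1) = -p (i+1) + (‖r (i+1)‖^2 / ‖r i‖^2) • p i := by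
      rw [h.p_succ i hij]; abel
    rw [hr, inner_add_right, inner_neg_right, real_inner_smul_right,
      h.inner_r_succ_p hA hi, hr_next_p]
    ring

theorem inner_p_succ_apply_p (h : IsCGRun A g j y r p α) {i : ℕ} (hi : i ≤ j) :
    ⟪p (i+1), A (p i)⟫ = 0 :=
  h.inner_p_succ_apply_p_of_inner_r_succ_r hA hi (h.inner_r_succ_r hA i hi)

theorem inner_p_apply_p_le (h : IsCGRun A g j y r p α) :
    ∀ i ≤ j + 1, ⟪p i, A (p i)⟫ ≤ ⟪r i, A (r i)⟫ := by
  rintro (_ | k) hk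
  · rw [h.p_zero, h.r_zero, map_neg, inner_neg_neg]
  have hkj : k ≤ j := by omega
  set β := ‖r (k+1)‖^2 / ‖r k‖^2
  have hconj : ⟪p k, A (p (k+1))⟫ = 0 := by
    rw [← hA, real_inner_comm, h.inner_p_succ_apply_p hA hkj]
  have hr_Ap : α k * ⟪r (k+1), A (p k)⟫ = ‖r (k+1)‖^2 := by
    rw [← real_inner_smul_right, h.α_smul_apply_p hkj, inner_sub_right,
      real_inner_self_eq_norm_sq, h.inner_r_succ_r hA k hkj, sub_zero]
  have hp_Ap : ⟪p (k+1), A (p (k+1))⟫ = -⟪r (k+1), A (p (k+1))⟫ := by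
    nth_rewrite 1 [h.p_succ k hkj]
    rw [inner_add_left, inner_neg_left, real_inner_smul_left, hconj, mul_zero, add_zero]
  have hr_Ap_succ :
      ⟪r (k+1), A (p (k+1))⟫ = -⟪r (k+1), A (r (k+1))⟫ + β * ⟪r (k+1), A (p k)⟫ := by
    rw [h.p_succ k hkj, map_add, map_neg, map_smul, inner_add_right, inner_neg_right,
      real_inner_smul_right]
  have hβ : 0 ≤ β * ⟪r (k+1), A (p k)⟫ := by
    have : 0 ≤ ⟪r (k+1), A (p k)⟫ := by
      rw [← mul_nonneg_iff_of_pos_left (h.α_pos hkj), hr_Ap]; positivity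
    positivity
  linarith

theorem quadObjective_y_succ (h : IsCGRun A g j y r p α) {i : ℕ} (hi : i ≤ j) :
    quadObjective A g (y (i+1)) = quadObjective A g (y i) - ‖r i‖^4 / (2 * ⟪p i, A (p i)⟫) := by
  have hc := (h.curv_pos i hi).ne'
  rw [h.y_succ i hi, quadObjective_add_smul hA, ← h.r_eq i (by omega), real_inner_comm,
    h.inner_r_p hA i (by omega), h.α_eq i hi]
  field_simp
  ring

theorem quadObjective_y_succ_le (h : IsCGRun A g j y r p α) {L : ℝ}
    (hL : ⟪r j, A (r j)⟫ ≤ L * ‖r j‖^2) :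
    quadObjective A g (y (j+1)) ≤ quadObjective A g (y j) - ‖r j‖^2 / (2 * L) := by
  have hc := h.curv_pos j le_rfl
  have hR : 0 < ‖r j‖^2 := pow_pos (norm_pos_iff.mpr (h.r_ne_zero j le_rfl)) 2
  have hcL : ⟪p j, A (p j)⟫ ≤ L * ‖r j‖^2 := (h.inner_p_apply_p_le hA j (by omega)).trans hL
  have hL0 : 0 < L := pos_of_mul_pos_left (hc.trans_le hcL) hR.le
  have : ‖r j‖^2 / (2 * L) ≤ ‖r j‖^4 / (2 * ⟪p j, A (p j)⟫) := by
    rw [div_le_div_iff₀ (by positivity) (by positivity)]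
    nlinarith
  rw [h.quadObjective_y_succ hA le_rfl]
  linarith

end IsCGRun

theorem stmt7_general
    {n : ℕ} (H : EuclideanSpace ℝ (Fin n) →L[ℝ] EuclideanSpace ℝ (Fin n))
    (hsym : ∀ x y : EuclideanSpace ℝ (Fin n), ⟪H x, y⟫ = ⟪x, H y⟫)
    (ε M : ℝ) (hM : ‖H‖ ≤ M)
    (Hb : EuclideanSpace ℝ (Fin n) →L[ℝ] EuclideanSpace ℝ (Fin n))
    (hHb : ∀ x : EuclideanSpace ℝ (Fin n), Hb x = H x + (2*ε) • x)
    (g : EuclideanSpace ℝ (Fin n))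
    (q : EuclideanSpace ℝ (Fin n) → ℝ)
    (hq : ∀ z, q z = 1/2 * ⟪z, Hb z⟫ + ⟪g, z⟫)
    (j : ℕ)
    (y r p : ℕ → EuclideanSpace ℝ (Fin n)) (α : ℕ → ℝ)
    (hy0 : y 0 = 0) (hr0 : r 0 = g) (hp0 : p 0 = -g)
    (hα : ∀ i ≤ j, α i = ‖r i‖^2 / ⟪p i, Hb (p i)⟫)
    (hyrec : ∀ i ≤ j, y (i+1) = y i + α i • p i)
    (hrrec : ∀ i ≤ j, r (i+1) = r i + α i • Hb (p i))
    (hprec : ∀ i ≤ j, p (i+1) = -(r (i+1)) + (‖r (i+1)‖^2 / ‖r i‖^2) • p i)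
    (hpcurv : ∀ i ≤ j, 0 < ⟪p i, Hb (p i)⟫)
    (hrne : ∀ i ≤ j, r i ≠ 0) :
    q (y (j+1)) ≤ q (y j) - ‖r j‖^2 / (2 * (M + 2*ε)) := by
  have hcg : IsCGRun (Hb : EuclideanSpace ℝ (Fin n) →ₗ[ℝ] _) g j y r p α :=
    ⟨hy0, hr0, hp0, hα, hyrec, hrrec, hprec, hpcurv, hrne⟩
  have hHb_symm : (Hb : EuclideanSpace ℝ (Fin n) →ₗ[ℝ] _).IsSymmetric := fun x z => by
    simp only [ContinuousLinearMap.coe_coe, hHb, inner_add_left, inner_add_right,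
      real_inner_smul_left, real_inner_smul_right, hsym]
  have hbound (x : EuclideanSpace ℝ (Fin n)) : ⟪x, Hb x⟫ ≤ (M + 2*ε) * ‖x‖^2 := by
    have hH : ⟪x, H x⟫ ≤ M * ‖x‖^2 := calc
      ⟪x, H x⟫ ≤ ‖x‖ * ‖H x‖ := real_inner_le_norm _ _
      _ ≤ ‖x‖ * (M * ‖x‖) := by gcongr; exact H.le_of_opNorm_le hM x
      _ = M * ‖x‖^2 := by ring
    rw [hHb, inner_add_right, real_inner_smul_right, real_inner_self_eq_norm_sq]
    linarith
  have hq' : q = quadObjective (Hb : EuclideanSpace ℝ (Fin n) →ₗ[ℝ] _) g := funext hq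
  rw [hq']
  exact hcg.quadObjective_y_succ_le hHb_symm (hbound (r j))

/-- Per-iteration decrease of the CG quadratic:
`q(y_{j+1}) ≤ q(y_j) − ‖r_j‖²/(2(M+2ε))`. -/
theorem stmt7
    {n : ℕ} (H : EuclideanSpace ℝ (Fin n) →L[ℝ] EuclideanSpace ℝ (Fin n))
    (hsym : ∀ x y : EuclideanSpace ℝ (Fin n), ⟪H x, y⟫ = ⟪x, H y⟫)
    (ε M : ℝ) (hε : 0 < ε) (hM : ‖H‖ ≤ M)
    (Hb : EuclideanSpace ℝ (Fin n) →L[ℝ] EuclideanSpace ℝ (Fin n))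
    (hHb : ∀ x : EuclideanSpace ℝ (Fin n), Hb x = H x + (2*ε) • x)
    (g : EuclideanSpace ℝ (Fin n)) (hg : g ≠ 0)
    (q : EuclideanSpace ℝ (Fin n) → ℝ)
    (hq : ∀ z, q z = 1/2 * ⟪z, Hb z⟫ + ⟪g, z⟫)
    (j : ℕ)
    (y r p : ℕ → EuclideanSpace ℝ (Fin n)) (α : ℕ → ℝ)
    (hy0 : y 0 = 0) (hr0 : r 0 = g) (hp0 : p 0 = -g)
    (hα : ∀ i ≤ j, α i = ‖r i‖^2 / ⟪p i, Hb (p i)⟫)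
    (hyrec : ∀ i ≤ j, y (i+1) = y i + α i • p i)
    (hrrec : ∀ i ≤ j, r (i+1) = r i + α i • Hb (p i))
    (hprec : ∀ i ≤ j, p (i+1) = -(r (i+1)) + (‖r (i+1)‖^2 / ‖r i‖^2) • p i)
    (hpcurv : ∀ i ≤ j, 0 < ⟪p i, Hb (p i)⟫)
    (hrne : ∀ i ≤ j, r i ≠ 0) :
    q (y (j+1)) ≤ q (y j) - ‖r j‖^2 / (2 * (M + 2*ε)) :=
  stmt7_general H hsym ε M hM Hb hHb g q hq j y r p α hy0 hr0 hp0 hα hyrec hrrec hprec hpcurv hrne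
end

section
/- Let f : ℝⁿ → ℝ be twice continuously differentiable with ∇²f Lipschitz continuous with constant L_H > 0, let ε_H > 0, θ ∈ (0,1), and η > 0. Let x be a point and d ≠ 0 a direction satisfying dᵀ∇f(x) ≤ 0 and dᵀ∇²f(x)d = −‖d‖³ ≤ −ε_H‖d‖². Then the smallest nonnegative integer j such that f(x + θʲd) < f(x) − (η/6)θ^{3j}‖d‖³ exists and satisfies j ≤ j_nc + 1, where j_nc = [log_θ(3/(L_H+η))]_+; moreover, with α = θʲ, f(x) − f(x + αd) ≥ c_nc·ε_H³, where c_nc = (η/6)·min{1, 27θ³/(L_H+η)³}. -/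
open RealInnerProductSpace

/-!
Along the ray `t ↦ x + t d`, the Lipschitz Hessian gives the cubic upper model
`f (x + t d) ≤ f x + t ⟪d, ∇f x⟫ + t² ⟪d, ∇²f x d⟫ / 2 + L_H ‖d‖³ t³ / 6`.
With `⟪d, ∇f x⟫ ≤ 0` and `⟪d, ∇²f x d⟫ = -‖d‖³`, the sufficient-decrease test therefore
accepts every step `α` with `α (L_H + η) < 3`. The backtracking index `j` is thus at most one
more than the first index with `θ ^ j < 3 / (L_H + η)`, so that `θ ^ j ≥ min 1 (3θ / (L_H + η))`,
and `‖d‖ ≥ ε_H` converts the accepted decrease into `c_nc ε_H³`.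
-/

open Set NNReal

section Calculus

theorem le_of_hasDerivAt_le_of_nonneg {g g' h h' : ℝ → ℝ}
    (hg : ∀ s, HasDerivAt g (g' s) s) (hh : ∀ s, HasDerivAt h (h' s) s)
    (h0 : g 0 ≤ h 0) (hle : ∀ s, 0 ≤ s → g' s ≤ h' s) {t : ℝ} (ht : 0 ≤ t) : g t ≤ h t :=
  image_le_of_deriv_right_le_deriv_boundary
    (fun s _ => (hg s).continuousAt.continuousWithinAt) (fun s _ => (hg s).hasDerivWithinAt) h0
    (fun s _ => (hh s).continuousAt.continuousWithinAt) (fun s _ => (hh s).hasDerivWithinAt)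
    (fun s hs => hle s hs.1) ⟨ht, le_rfl⟩

theorem le_cubic_of_deriv2_le {φ φ' φ'' : ℝ → ℝ} {M t : ℝ}
    (hφ : ∀ s, HasDerivAt φ (φ' s) s) (hφ' : ∀ s, HasDerivAt φ' (φ'' s) s)
    (hM : ∀ s, 0 ≤ s → φ'' s ≤ φ'' 0 + M * s) (ht : 0 ≤ t) :
    φ t ≤ φ 0 + t * φ' 0 + t ^ 2 / 2 * φ'' 0 + M * t ^ 3 / 6 := by
  have hquad : ∀ s, HasDerivAt (fun s => φ' 0 + s * φ'' 0 + M * s ^ 2 / 2) (φ'' 0 + M * s) s :=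
    fun s => ((((hasDerivAt_id s).mul_const (φ'' 0)).const_add (φ' 0)).add
      (((hasDerivAt_pow 2 s).const_mul M).div_const 2)).congr_deriv (by simp; ring)
  have hcubic : ∀ s, HasDerivAt (fun s => φ 0 + s * φ' 0 + s ^ 2 / 2 * φ'' 0 + M * s ^ 3 / 6)
      (φ' 0 + s * φ'' 0 + M * s ^ 2 / 2) s :=
    fun s => (((((hasDerivAt_id s).mul_const (φ' 0)).const_add (φ 0)).add
      (((hasDerivAt_pow 2 s).div_const 2).mul_const (φ'' 0))).add
      (((hasDerivAt_pow 3 s).const_mul M).div_const 6)).congr_deriv (by simp; ring)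
  have hφ'_le : ∀ s, 0 ≤ s → φ' s ≤ φ' 0 + s * φ'' 0 + M * s ^ 2 / 2 :=
    fun s hs => le_of_hasDerivAt_le_of_nonneg hφ' hquad (by simp) hM hs
  exact le_of_hasDerivAt_le_of_nonneg hφ hcubic (by simp) hφ'_le ht

end Calculus

section Ray

variable {E : Type*} [NormedAddCommGroup E] [InnerProductSpace ℝ E]

theorem hasDerivAt_add_smul (x d : E) (t : ℝ) : HasDerivAt (fun s : ℝ => x + s • d) d t := by
  simpa using ((hasDerivAt_id t).smul_const d).const_add x

theorem hasDerivAt_inner_apply_add_smul {G : E → E} (hG : Differentiable ℝ G) (x d : E) (t : ℝ) :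
    HasDerivAt (fun s : ℝ => ⟪d, G (x + s • d)⟫) ⟪d, fderiv ℝ G (x + t • d) d⟫ t :=
  ((innerSL ℝ d).hasFDerivAt.comp _ (hG _).hasFDerivAt).comp_hasDerivAt t (hasDerivAt_add_smul x d t)

theorem inner_apply_le_of_lipschitzWith {H : E → E →L[ℝ] E} {K : ℝ≥0} (hH : LipschitzWith K H)
    (x y d : E) : ⟪d, H y d⟫ ≤ ⟪d, H x d⟫ + K * ‖y - x‖ * ‖d‖ ^ 2 := by
  have hdiff : ⟪d, H y d⟫ - ⟪d, H x d⟫ = ⟪d, (H y - H x) d⟫ := by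
    simp [inner_sub_right]
  have hbound : ⟪d, (H y - H x) d⟫ ≤ K * ‖y - x‖ * ‖d‖ ^ 2 :=
    calc ⟪d, (H y - H x) d⟫ ≤ ‖d‖ * (‖H y - H x‖ * ‖d‖) :=
          (real_inner_le_norm _ _).trans (by gcongr; exact (H y - H x).le_opNorm d)
      _ ≤ ‖d‖ * (K * ‖y - x‖ * ‖d‖) := by gcongr; exact hH.norm_sub_le y x
      _ = K * ‖y - x‖ * ‖d‖ ^ 2 := by ring
  linarith

variable [CompleteSpace E]

theorem ContDiff.differentiable_gradient {f : E → ℝ} (hf : ContDiff ℝ 2 f) :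
    Differentiable ℝ (gradient f) :=
  ((InnerProductSpace.toDual ℝ E).symm.contDiff.comp
    (hf.fderiv_right (m := 1) le_rfl)).differentiable one_ne_zero

theorem hasDerivAt_apply_add_smul {f : E → ℝ} (hf : Differentiable ℝ f) (x d : E) (t : ℝ) :
    HasDerivAt (fun s : ℝ => f (x + s • d)) ⟪d, gradient f (x + t • d)⟫ t := by
  have := (hf _).hasGradientAt.hasFDerivAt.comp_hasDerivAt t (hasDerivAt_add_smul x d t)
  rwa [InnerProductSpace.toDual_apply_apply, real_inner_comm] at this

theorem apply_add_smul_le_cubic {f : E → ℝ} (hf : Differentiable ℝ f)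
    (hg : Differentiable ℝ (gradient f)) {K : ℝ≥0} (hH : LipschitzWith K (fderiv ℝ (gradient f)))
    (x d : E) {t : ℝ} (ht : 0 ≤ t) :
    f (x + t • d) ≤ f x + t * ⟪d, gradient f x⟫ + t ^ 2 / 2 * ⟪d, fderiv ℝ (gradient f) x d⟫
      + K * ‖d‖ ^ 3 * t ^ 3 / 6 := by
  have hM : ∀ s : ℝ, 0 ≤ s → ⟪d, fderiv ℝ (gradient f) (x + s • d) d⟫
      ≤ ⟪d, fderiv ℝ (gradient f) (x + (0 : ℝ) • d) d⟫ + K * ‖d‖ ^ 3 * s := fun s hs => by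
    have := inner_apply_le_of_lipschitzWith hH x (x + s • d) d
    rw [add_sub_cancel_left, norm_smul, Real.norm_of_nonneg hs] at this
    simpa [mul_pow] using this.trans_eq (by ring)
  simpa using le_cubic_of_deriv2_le (hasDerivAt_apply_add_smul hf x d)
    (hasDerivAt_inner_apply_add_smul hg x d) hM ht

theorem apply_add_smul_lt_of_negCurvature {f : E → ℝ} (hf : Differentiable ℝ f)
    (hg : Differentiable ℝ (gradient f)) {K : ℝ≥0} (hH : LipschitzWith K (fderiv ℝ (gradient f)))
    {x d : E} (hd : d ≠ 0) (hdg : ⟪d, gradient f x⟫ ≤ 0)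
    (hcurv : ⟪d, fderiv ℝ (gradient f) x d⟫ = -‖d‖ ^ 3) {α η : ℝ} (hα : 0 < α)
    (hαη : α * (K + η) < 3) :
    f (x + α • d) < f x - η / 6 * α ^ 3 * ‖d‖ ^ 3 := by
  have hcubic := apply_add_smul_le_cubic hf hg hH x d hα.le
  rw [hcurv] at hcubic
  have hslope : α * ⟪d, gradient f x⟫ ≤ 0 := mul_nonpos_of_nonneg_of_nonpos hα.le hdg
  have hpos : 0 < α ^ 2 * ‖d‖ ^ 3 := by have := norm_pos_iff.2 hd; positivity
  nlinarith

end Ray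

section Backtracking

variable {θ a : ℝ} {P : ℕ → Prop}

theorem le_pow_of_forall_lt_succ_not (hP : ∀ j, θ ^ j < a → P j) {k : ℕ}
    (hmin : ∀ i < k + 1, ¬ P i) : a ≤ θ ^ k :=
  le_of_not_gt fun h => hmin k k.lt_succ_self (hP k h)

theorem natCast_le_max_logb_add_one (hθ : θ ∈ Ioo 0 1) (ha : 0 < a)
    (hP : ∀ j, θ ^ j < a → P j) {j : ℕ} (hmin : ∀ i < j, ¬ P i) :
    (j : ℝ) ≤ max (Real.logb θ a) 0 + 1 := by
  have hmax := le_max_right (Real.logb θ a) 0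
  cases j with
  | zero => simpa using hmax.trans (le_add_of_nonneg_right zero_le_one)
  | succ k =>
    have hk : (k : ℝ) ≤ Real.logb θ a := by
      rw [Real.le_logb_iff_rpow_le_of_base_lt_one hθ.1 hθ.2 ha, Real.rpow_natCast]
      exact le_pow_of_forall_lt_succ_not hP hmin
    push_cast
    linarith [le_max_left (Real.logb θ a) 0]

theorem min_one_mul_le_pow (hθ : θ ∈ Ioo 0 1) (hP : ∀ j, θ ^ j < a → P j) {j : ℕ}
    (hmin : ∀ i < j, ¬ P i) : min 1 (θ * a) ≤ θ ^ j := by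
  cases j with
  | zero => simp
  | succ k =>
    calc min 1 (θ * a) ≤ θ * a := min_le_right _ _
      _ ≤ θ * θ ^ k := by gcongr; exacts [hθ.1.le, le_pow_of_forall_lt_succ_not hP hmin]
      _ = θ ^ (k + 1) := (pow_succ' θ k).symm

theorem min_one_mul_pow_le_pow_mul (hθ : θ ∈ Ioo 0 1) (ha : 0 ≤ a) (hP : ∀ j, θ ^ j < a → P j)
    {j : ℕ} (hmin : ∀ i < j, ¬ P i) (m : ℕ) : min 1 ((θ * a) ^ m) ≤ θ ^ (m * j) := by
  have hθa : 0 ≤ θ * a := mul_nonneg hθ.1.le ha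
  calc min 1 ((θ * a) ^ m) ≤ min 1 (θ * a) ^ m := by
        rcases le_total (θ * a) 1 with h | h
        · simp [min_eq_right h]
        · simp [min_eq_left h]
    _ ≤ (θ ^ j) ^ m := pow_le_pow_left₀ (le_min zero_le_one hθa) (min_one_mul_le_pow hθ hP hmin) m
    _ = θ ^ (m * j) := (pow_mul' θ m j).symm

end Backtracking

/-- Lemma 4 (line search along negative curvature directions): the
backtracking line search terminates in at most `j_nc + 1` steps and yields a
decrease of at least `c_nc · ε_H³`.  The Hessian of `f` at `x` is represented
as `fderiv ℝ (gradient f) x`. -/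
theorem stmt16
    {n : ℕ} (f : EuclideanSpace ℝ (Fin n) → ℝ)
    (L_H : ℝ) (hLH : 0 < L_H)
    (hf : ContDiff ℝ 2 f)
    (hLip : LipschitzWith (Real.toNNReal L_H)
      (fun z : EuclideanSpace ℝ (Fin n) => fderiv ℝ (gradient f) z))
    (ε_H θ η : ℝ)
    (hεH : 0 < ε_H) (hθ : θ ∈ Set.Ioo (0:ℝ) 1) (hη : 0 < η)
    (x d : EuclideanSpace ℝ (Fin n)) (hd : d ≠ 0)
    (hdg : ⟪d, gradient f x⟫ ≤ 0)
    (hcurv : ⟪d, fderiv ℝ (gradient f) x d⟫ = -‖d‖^3)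
    (hcurv2 : -‖d‖^3 ≤ -ε_H * ‖d‖^2) :
    ∃ j : ℕ,
      f (x + θ^j • d) < f x - η/6 * θ^(3*j) * ‖d‖^3 ∧
      (∀ i < j, ¬ (f (x + θ^i • d) < f x - η/6 * θ^(3*i) * ‖d‖^3)) ∧
      (j : ℝ) ≤ max (Real.logb θ (3/(L_H+η))) 0 + 1 ∧
      f x - f (x + θ^j • d) ≥
        η/6 * min 1 (27*θ^3/(L_H+η)^3) * ε_H^3 := by
  classical
  have hc : 0 < L_H + η := by linarith
  have haccept : ∀ j : ℕ, θ ^ j < 3 / (L_H + η) →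
      f (x + θ^j • d) < f x - η/6 * θ^(3*j) * ‖d‖^3 := fun j hj => by
    rw [pow_mul']
    refine apply_add_smul_lt_of_negCurvature (hf.differentiable two_ne_zero)
      hf.differentiable_gradient hLip hd hdg hcurv (pow_pos hθ.1 j) ?_
    rwa [Real.coe_toNNReal _ hLH.le, ← lt_div_iff₀ hc]
  obtain ⟨j, hj, hmin⟩ : ∃ j : ℕ, f (x + θ^j • d) < f x - η/6 * θ^(3*j) * ‖d‖^3 ∧
      ∀ i < j, ¬ (f (x + θ^i • d) < f x - η/6 * θ^(3*i) * ‖d‖^3) := by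
    have hexists := (exists_pow_lt_of_lt_one (by positivity) hθ.2).imp haccept
    exact ⟨Nat.find hexists, Nat.find_spec hexists, fun _ => Nat.find_min hexists⟩
  refine ⟨j, hj, hmin, natCast_le_max_logb_add_one hθ (by positivity) haccept hmin, ?_⟩
  have hεd : ε_H ≤ ‖d‖ := le_of_mul_le_mul_right
    (by linarith [show ‖d‖ ^ 3 = ‖d‖ * ‖d‖ ^ 2 by ring]) (by positivity : 0 < ‖d‖ ^ 2)
  have hcube : min 1 (27*θ^3/(L_H+η)^3) ≤ θ^(3*j) := by
    convert min_one_mul_pow_le_pow_mul hθ (by positivity) haccept hmin 3 using 2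
    rw [mul_pow, div_pow]
    ring
  have hθ0 := hθ.1
  have hdecrease : η/6 * min 1 (27*θ^3/(L_H+η)^3) * ε_H^3 ≤ η/6 * θ^(3*j) * ‖d‖^3 := by
    gcongr
  linarith
end
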